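/- The estimates Ω_k(S) = (λ_min[(L^k)_{S^c}])^{1/k} are nondecreasing in k when k ranges over powers of 2; in particular Ω_1(S) ≤ Ω_2(S). -/

import Mathlib

/-!
Let `A = (L^k)_{Sᶜ}` and `B = (L^{2k})_{Sᶜ}`, and let `v` be an eigenvector of `B` for `l₂`.
Extending `v` by zero to `g`, Cauchy–Schwarz and the symmetry of `L^k` give
`(vᵀAv)² = (gᵀL^k g)² ≤ |g|² |L^k g|² = |v|² vᵀBv = l₂ |v|⁴`,
while `l₁ |v|² ≤ vᵀAv` since `l₁` is the least eigenvalue of `A`. Hence `l₁² ≤ l₂`,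
and `l₁ ≥ 0` because `A` is positive semidefinite, so taking `2k`-th roots gives the claim.
-/

open Matrix

namespace Matrix

variable {m n : Type*} [Fintype m] [Fintype n]

theorem dotProduct_submatrix_self_mulVec [DecidableEq n] {R : Type*} [CommSemiring R]
    (A : Matrix n n R) (e : m → n) (v : m → R) :
    v ⬝ᵥ (A.submatrix e e *ᵥ v) =
      ((1 : Matrix n n R).submatrix id e *ᵥ v) ⬝ᵥ
        (A *ᵥ ((1 : Matrix n n R).submatrix id e *ᵥ v)) := by
  have hA : A.submatrix e e =
      ((1 : Matrix n n R).submatrix id e)ᵀ * A * (1 : Matrix n n R).submatrix id e := by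
    ext i j
    simp [mul_apply, one_apply]
  rw [hA, ← mulVec_mulVec, ← mulVec_mulVec, dotProduct_mulVec, vecMul_transpose]

theorem sq_dotProduct_mulVec_le_of_isSymm {M : Matrix n n ℝ} (hM : M.IsSymm) (w : n → ℝ) :
    (w ⬝ᵥ (M *ᵥ w)) ^ 2 ≤ (w ⬝ᵥ w) * (w ⬝ᵥ ((M * M) *ᵥ w)) := by
  have hMM : w ⬝ᵥ ((M * M) *ᵥ w) = (M *ᵥ w) ⬝ᵥ (M *ᵥ w) := by
    rw [← mulVec_mulVec, dotProduct_mulVec, ← mulVec_transpose, hM.eq, dotProduct_comm]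
  rw [hMM]
  simpa only [dotProduct, sq] using Finset.sum_mul_sq_le_sq_mul_sq Finset.univ w (M *ᵥ w)

theorem sq_dotProduct_submatrix_mulVec_le {M : Matrix n n ℝ} (hM : M.IsSymm) {e : m → n}
    (he : Function.Injective e) (v : m → ℝ) :
    (v ⬝ᵥ (M.submatrix e e *ᵥ v)) ^ 2 ≤ (v ⬝ᵥ v) * (v ⬝ᵥ ((M * M).submatrix e e *ᵥ v)) := by
  classical
  have hv : v ⬝ᵥ v = v ⬝ᵥ ((1 : Matrix n n ℝ).submatrix e e *ᵥ v) := by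
    rw [submatrix_one e he, one_mulVec]
  rw [hv, dotProduct_submatrix_self_mulVec, dotProduct_submatrix_self_mulVec,
    dotProduct_submatrix_self_mulVec, one_mulVec]
  exact sq_dotProduct_mulVec_le_of_isSymm hM _

theorem IsHermitian.posSemidef_sub_smul_one [DecidableEq m] {A : Matrix m m ℝ}
    (hA : A.IsHermitian) {l : ℝ}
    (hl : l ∈ lowerBounds {μ | ∃ v : m → ℝ, v ≠ 0 ∧ A *ᵥ v = μ • v}) :
    (A - l • 1).PosSemidef := by
  have hM : (A - l • 1).IsHermitian := hA.sub (isHermitian_one.smul (IsSelfAdjoint.all l))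
  refine hM.posSemidef_iff_eigenvalues_nonneg.mpr fun i => ?_
  have hu : ⇑(hM.eigenvectorBasis i) ≠ 0 := fun h =>
    hM.eigenvectorBasis.orthonormal.ne_zero i (by ext j; exact congrFun h j)
  have hAu : A *ᵥ hM.eigenvectorBasis i = (hM.eigenvalues i + l) • hM.eigenvectorBasis i := by
    have h := hM.mulVec_eigenvectorBasis i
    rw [sub_mulVec, smul_mulVec, one_mulVec, sub_eq_iff_eq_add] at h
    rw [h, add_smul]
  have := hl ⟨_, hu, hAu⟩
  simp only [Pi.zero_apply]
  linarith

theorem IsHermitian.mul_dotProduct_self_le {A : Matrix m m ℝ} (hA : A.IsHermitian) {l : ℝ}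
    (hl : l ∈ lowerBounds {μ | ∃ v : m → ℝ, v ≠ 0 ∧ A *ᵥ v = μ • v}) (v : m → ℝ) :
    l * (v ⬝ᵥ v) ≤ v ⬝ᵥ (A *ᵥ v) := by
  classical
  have h := (hA.posSemidef_sub_smul_one hl).dotProduct_mulVec_nonneg v
  rw [star_trivial, sub_mulVec, dotProduct_sub, smul_mulVec, one_mulVec, dotProduct_smul,
    smul_eq_mul] at h
  linarith

theorem PosSemidef.nonneg_of_mulVec_eq_smul {A : Matrix m m ℝ} (hA : A.PosSemidef) {μ : ℝ}
    {v : m → ℝ} (hv : v ≠ 0) (hAv : A *ᵥ v = μ • v) : 0 ≤ μ := by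
  have hq := hA.dotProduct_mulVec_nonneg v
  rw [star_trivial, hAv, dotProduct_smul, smul_eq_mul] at hq
  have hpos : 0 < v ⬝ᵥ v := by simpa using dotProduct_star_self_pos_iff.mpr hv
  exact nonneg_of_mul_nonneg_left hq hpos

end Matrix

theorem Real.rpow_two_mul_le_rpow_of_sq_le {a b t : ℝ} (ha : 0 ≤ a) (hab : a ^ 2 ≤ b)
    (ht : 0 ≤ t) : a ^ (2 * t) ≤ b ^ t := by
  rw [Real.rpow_mul ha, Real.rpow_two]
  exact Real.rpow_le_rpow (sq_nonneg a) hab ht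

theorem cutoff_estimate_doubling_mono_general {N : ℕ}
    (L : Matrix (Fin N) (Fin N) ℝ) (hL : L.PosSemidef)
    (S : Finset (Fin N)) (k : ℕ) (l1 l2 : ℝ)
    (h1 : IsLeast {μ : ℝ | ∃ v : {x // x ∉ S} → ℝ, v ≠ 0 ∧
      ((L ^ k).submatrix (fun i : {x // x ∉ S} => (i : Fin N))
        (fun i : {x // x ∉ S} => (i : Fin N))) *ᵥ v = μ • v} l1)
    (h2 : IsLeast {μ : ℝ | ∃ v : {x // x ∉ S} → ℝ, v ≠ 0 ∧
      ((L ^ (2 * k)).submatrix (fun i : {x // x ∉ S} => (i : Fin N))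
        (fun i : {x // x ∉ S} => (i : Fin N))) *ᵥ v = μ • v} l2) :
    l1 ^ ((1 : ℝ) / k) ≤ l2 ^ ((1 : ℝ) / (2 * k)) := by
  have hA : ((L ^ k).submatrix (fun i : {x // x ∉ S} => (i : Fin N))
      (fun i : {x // x ∉ S} => (i : Fin N))).PosSemidef := (hL.pow k).submatrix _
  have hl1 : 0 ≤ l1 := by
    obtain ⟨u, hu, hAu⟩ := h1.1
    exact hA.nonneg_of_mulVec_eq_smul hu hAu
  have hsq : l1 ^ 2 ≤ l2 := by
    obtain ⟨v, hv, hBv⟩ := h2.1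
    have hpos : 0 < v ⬝ᵥ v := by simpa using dotProduct_star_self_pos_iff.mpr hv
    have hRayleigh := hA.isHermitian.mul_dotProduct_self_le h1.2 v
    have hCS := sq_dotProduct_submatrix_mulVec_le
      (isHermitian_iff_isSymm.mp (hL.pow k).isHermitian)
      (e := fun i : {x // x ∉ S} => (i : Fin N)) Subtype.val_injective v
    rw [← sq, ← pow_mul', hBv, dotProduct_smul, smul_eq_mul] at hCS
    have h := (pow_le_pow_left₀ (by positivity) hRayleigh 2).trans hCS
    refine le_of_mul_le_mul_right (a := (v ⬝ᵥ v) ^ 2) ?_ (by positivity)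
    linarith
  rw [show (1 : ℝ) / k = 2 * (1 / (2 * k)) by ring]
  exact Real.rpow_two_mul_le_rpow_of_sq_le hl1 hsq (by positivity)

/-- The cut-off frequency estimates `Ω_k(S) = (λ_min[(L^k)_{Sᶜ}])^{1/k}` are
nondecreasing when `k` doubles: `Ω_k(S) ≤ Ω_{2k}(S)`; in particular
`Ω_1(S) ≤ Ω_2(S)`. -/
theorem cutoff_estimate_doubling_mono {N : ℕ}
    (L : Matrix (Fin N) (Fin N) ℝ) (hL : L.PosSemidef)
    (S : Finset (Fin N)) (k : ℕ) (hk : 1 ≤ k) (l1 l2 : ℝ)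
    (h1 : IsLeast {μ : ℝ | ∃ v : {x // x ∉ S} → ℝ, v ≠ 0 ∧
      ((L ^ k).submatrix (fun i : {x // x ∉ S} => (i : Fin N))
        (fun i : {x // x ∉ S} => (i : Fin N))) *ᵥ v = μ • v} l1)
    (h2 : IsLeast {μ : ℝ | ∃ v : {x // x ∉ S} → ℝ, v ≠ 0 ∧
      ((L ^ (2 * k)).submatrix (fun i : {x // x ∉ S} => (i : Fin N))
        (fun i : {x // x ∉ S} => (i : Fin N))) *ᵥ v = μ • v} l2) :
    l1 ^ ((1 : ℝ) / k) ≤ l2 ^ ((1 : ℝ) / (2 * k)) :=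
  cutoff_estimate_doubling_mono_general L hL S k l1 l2 h1 h2
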